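/- Let C, A_1, …, A_m ∈ M_n be Hermitian with C = diag(c_1, …, c_n), c_1 ≥ … ≥ c_n. For a unit vector v = (v_1, …, v_m)^t ∈ ℝ^m let 𝓟_v(A) = {(a_1, …, a_m) ∈ ℝ^m : Σ_{j=1}^m v_j a_j ≤ Σ_{j=1}^n c_j λ_j(v_1 A_1 + … + v_m A_m)}, where λ_1(H) ≥ … ≥ λ_n(H) denote the eigenvalues of a Hermitian matrix H in descending order. Then conv W_C(A_1, …, A_m) = ⋂ {𝓟_v(A) : v ∈ ℝ^m, v^t v = 1}. -/

import Mathlib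

open Matrix

/-- The joint `C`-numerical range of a tuple of Hermitian matrices, regarded as a
subset of `ℝ^m`. -/
noncomputable def jointCNumRangeR {n m : ℕ} (C : Matrix (Fin n) (Fin n) ℂ)
    (A : Fin m → Matrix (Fin n) (Fin n) ℂ) : Set (Fin m → ℝ) :=
  { p | ∃ U ∈ Matrix.unitaryGroup (Fin n) ℂ,
      ∀ j, (p j : ℂ) = (C * (star U * A j * U)).trace }

/-- The eigenvalues of a Hermitian matrix, arranged in descending order
`λ₁(H) ≥ … ≥ λₙ(H)` (junk value `0` if `H` is not Hermitian). -/
noncomputable def eigDesc {n : ℕ} (H : Matrix (Fin n) (Fin n) ℂ) : Fin n → ℝ :=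
  if h : H.IsHermitian then
    fun i => (h.eigenvalues ∘ Tuple.sort h.eigenvalues) i.rev
  else 0

/-! The map `U ↦ (tr (C U* Aⱼ U))ⱼ` pairs with a vector `v` to `tr (C U* H U)`, `H = ∑ vⱼ Aⱼ`.
Diagonalising `H = W diag(λ) W*`, this equals `c ⬝ᵥ (B λ)` with `B = (|(W* U)ₖᵢ|²)ᵀ` doubly
stochastic, so by Birkhoff's theorem and the rearrangement inequality it is at most
`∑ cᵢ λᵢ(H)`, with equality when `W* U` is the permutation matrix sorting `λ` decreasingly.
Hence `v ↦ ∑ cᵢ λᵢ(∑ vⱼ Aⱼ)` is the support function of the compact set `W_C(A)`, and the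
closed convex set `conv W_C(A)` is the intersection of its supporting half-spaces. -/

-- Carathéodory: `finrank + 1` points suffice; shorter families are padded with zero weights.
theorem convexHull_eq_image_stdSimplex {E : Type*} [AddCommGroup E] [Module ℝ E]
    [FiniteDimensional ℝ E] (s : Set E) :
    convexHull ℝ s = (fun q : (Fin (Module.finrank ℝ E + 1) → ℝ) × (Fin _ → E) =>
      ∑ i, q.1 i • q.2 i) '' (stdSimplex ℝ _ ×ˢ Set.univ.pi fun _ => s) := by
  refine subset_antisymm (fun x hx => ?_) ?_
  · obtain ⟨ι, _, z, w, hzs, hz, hw0, hw1, rfl⟩ := eq_pos_convex_span_of_mem_convexHull hx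
    have hcard : Fintype.card ι ≤ Fintype.card (Fin (Module.finrank ℝ E + 1)) := by
      simpa using hz.card_le_finrank_succ.trans (Nat.succ_le_succ (Submodule.finrank_le _))
    obtain ⟨e⟩ := Function.Embedding.nonempty_of_card_le hcard
    obtain ⟨i₀⟩ : Nonempty ι := by
      by_contra h
      simp [not_nonempty_iff.mp h] at hw1
    refine ⟨(Function.extend e w 0, Function.extend e z fun _ => z i₀),
      ⟨⟨fun j => ?_, ?_⟩, fun j _ => ?_⟩, ?_⟩
    · by_cases hj : ∃ i, e i = j
      · obtain ⟨i, rfl⟩ := hj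
        simpa [e.injective.extend_apply] using (hw0 i).le
      · simp [Function.extend_apply' _ _ _ hj]
    · rw [← hw1]
      refine (Fintype.sum_of_injective e e.injective _ _ (fun j hj => ?_) fun i => ?_).symm
      · simp [Function.extend_apply' _ _ _ hj]
      · simp [e.injective.extend_apply]
    · by_cases hj : ∃ i, e i = j
      · obtain ⟨i, rfl⟩ := hj
        simpa [e.injective.extend_apply] using hzs (Set.mem_range_self i)
      · simpa [Function.extend_apply' _ _ _ hj] using hzs (Set.mem_range_self i₀)
    · refine (Fintype.sum_of_injective e e.injective _ _ (fun j hj => ?_) fun i => ?_).symm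
      · simp [Function.extend_apply' _ _ _ hj]
      · simp [e.injective.extend_apply]
  · rintro _ ⟨⟨w, z⟩, ⟨⟨hw0, hw1⟩, hz⟩, rfl⟩
    exact mem_convexHull_of_exists_fintype w z hw0 hw1 (fun i => hz i trivial) rfl

theorem IsCompact.convexHull {E : Type*} [AddCommGroup E] [Module ℝ E] [TopologicalSpace E]
    [ContinuousAdd E] [ContinuousSMul ℝ E] [FiniteDimensional ℝ E] {s : Set E}
    (hs : IsCompact s) : IsCompact (convexHull ℝ s) := by
  rw [convexHull_eq_image_stdSimplex]
  exact ((isCompact_stdSimplex ℝ _).prod (isCompact_univ_pi fun _ => hs)).image (by fun_prop)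

lemma LinearMap.apply_eq_dotProduct {R ι : Type*} [CommSemiring R] [Fintype ι] [DecidableEq ι]
    (f : (ι → R) →ₗ[R] R) (a : ι → R) : f a = (fun i => f (Pi.single i 1)) ⬝ᵥ a := by
  conv_lhs => rw [← Finset.univ_sum_single a]
  simp only [map_sum, dotProduct]
  refine Finset.sum_congr rfl fun i _ => ?_
  rw [show Pi.single i (a i) = a i • Pi.single i (1 : R) by
    rw [← Pi.single_smul, smul_eq_mul, mul_one], map_smul, smul_eq_mul, mul_comm]

lemma exists_pos_smul_dotProduct_self_eq_one {ι : Type*} [Fintype ι] {w : ι → ℝ} (hw : w ≠ 0) :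
    ∃ t : ℝ, 0 < t ∧ t • w ⬝ᵥ t • w = 1 := by
  have hww : 0 < w ⬝ᵥ w := (Finset.sum_nonneg fun i _ => mul_self_nonneg (w i)).lt_of_ne'
    (dotProduct_self_eq_zero.not.mpr hw)
  refine ⟨(√(w ⬝ᵥ w))⁻¹, by positivity, ?_⟩
  rw [smul_dotProduct, dotProduct_smul, smul_eq_mul, smul_eq_mul, ← mul_assoc, ← mul_inv,
    Real.mul_self_sqrt hww.le, inv_mul_cancel₀ hww.ne']

theorem convexHull_eq_iInter_halfSpaces {ι : Type*} [Fintype ι] {S : Set (ι → ℝ)}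
    (hS : IsCompact S) (h : (ι → ℝ) → ℝ) (h_le : ∀ v, ∀ p ∈ S, v ⬝ᵥ p ≤ h v)
    (h_attained : ∀ v, ∃ p ∈ S, v ⬝ᵥ p = h v) :
    convexHull ℝ S = ⋂ v ∈ {v : ι → ℝ | v ⬝ᵥ v = 1}, {a | v ⬝ᵥ a ≤ h v} := by
  refine subset_antisymm (convexHull_min ?_ ?_) fun x hx => ?_
  · exact fun p hp => Set.mem_iInter₂.mpr fun v _ => h_le v p hp
  · exact convex_iInter₂ fun v _ =>
      convex_halfSpace_le ⟨dotProduct_add v, fun r a => dotProduct_smul r v a⟩ _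
  classical
  by_contra hx'
  obtain ⟨f, u, hfK, hfx⟩ := geometric_hahn_banach_closed_point (convex_convexHull ℝ S)
    hS.convexHull.isClosed hx'
  set w : ι → ℝ := fun i => f (Pi.single i 1)
  have hf (a : ι → ℝ) : f a = w ⬝ᵥ a := (f : (ι → ℝ) →ₗ[ℝ] ℝ).apply_eq_dotProduct a
  have hS_lt (p) (hp : p ∈ S) : w ⬝ᵥ p < w ⬝ᵥ x := by
    rw [← hf, ← hf]
    exact (hfK p (subset_convexHull ℝ S hp)).trans hfx
  have hw : w ≠ 0 := by
    intro hw
    obtain ⟨p, hp, -⟩ := h_attained 0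
    simpa [hw] using hS_lt p hp
  -- `x` satisfies the constraint of the unit normal `t • w`, whose bound is attained in `S`
  obtain ⟨t, ht, hunit⟩ := exists_pos_smul_dotProduct_self_eq_one hw
  obtain ⟨p, hp, hp_eq⟩ := h_attained (t • w)
  have hxp : t * (w ⬝ᵥ x) ≤ t * (w ⬝ᵥ p) := by
    simpa only [← hp_eq, smul_dotProduct, smul_eq_mul, Set.mem_ofPred_eq] using
      Set.mem_iInter₂.mp hx _ hunit
  exact (le_of_mul_le_mul_left hxp ht).not_gt (hS_lt p hp)

def sortDesc {n : ℕ} {α : Type*} [LinearOrder α] (l : Fin n → α) : Equiv.Perm (Fin n) :=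
  Fin.revPerm.trans (Tuple.sort l)

lemma antitone_comp_sortDesc {n : ℕ} {α : Type*} [LinearOrder α] (l : Fin n → α) :
    Antitone (l ∘ sortDesc l) :=
  fun _ _ hij => Tuple.monotone_sort l (Fin.rev_le_rev.mpr hij)

lemma dotProduct_comp_perm_le_dotProduct_comp_sortDesc {n : ℕ} {c : Fin n → ℝ} (hc : Antitone c)
    (l : Fin n → ℝ) (σ : Equiv.Perm (Fin n)) : c ⬝ᵥ (l ∘ σ) ≤ c ⬝ᵥ (l ∘ sortDesc l) := by
  have := (hc.monovary (antitone_comp_sortDesc l)).sum_mul_comp_perm_le_sum_mul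
    (σ := σ.trans (sortDesc l).symm)
  simpa [dotProduct] using this

lemma dotProduct_mulVec_le_of_mem_doublyStochastic {n : ℕ} {c : Fin n → ℝ} (hc : Antitone c)
    {B : Matrix (Fin n) (Fin n) ℝ} (hB : B ∈ doublyStochastic ℝ (Fin n)) (l : Fin n → ℝ) :
    c ⬝ᵥ (B *ᵥ l) ≤ c ⬝ᵥ (l ∘ sortDesc l) := by
  obtain ⟨w, hw0, hw1, rfl⟩ := exists_eq_sum_perm_of_mem_doublyStochastic hB
  calc c ⬝ᵥ ((∑ σ, w σ • σ.permMatrix ℝ) *ᵥ l) = ∑ σ, w σ * (c ⬝ᵥ (l ∘ σ)) := by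
        simp [Matrix.sum_mulVec, smul_mulVec, permMatrix_mulVec, dotProduct_sum, dotProduct_smul]
    _ ≤ ∑ σ, w σ * (c ⬝ᵥ (l ∘ sortDesc l)) := by
        gcongr with σ
        · exact hw0 σ
        · exact dotProduct_comp_perm_le_dotProduct_comp_sortDesc hc l σ
    _ = c ⬝ᵥ (l ∘ sortDesc l) := by rw [← Finset.sum_mul, hw1, one_mul]

lemma eigDesc_eq {n : ℕ} {H : Matrix (Fin n) (Fin n) ℂ} (hH : H.IsHermitian) :
    eigDesc H = hH.eigenvalues ∘ sortDesc hH.eigenvalues := by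
  rw [eigDesc, dif_pos hH]
  rfl

def unistochastic {ι : Type*} (U : Matrix ι ι ℂ) : Matrix ι ι ℝ :=
  of fun i j => Complex.normSq (U i j)

lemma unistochastic_permMatrix {ι : Type*} [DecidableEq ι] (σ : Equiv.Perm ι) :
    unistochastic (σ.permMatrix ℂ) = σ.permMatrix ℝ := by
  ext i j
  simp [unistochastic, PEquiv.toMatrix_apply, apply_ite Complex.normSq]

lemma re_trace_mul_conj_sum_smul {ι κ : Type*} [Fintype ι] [Fintype κ] (C U : Matrix ι ι ℂ)
    (A : κ → Matrix ι ι ℂ) (v : κ → ℝ) :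
    (C * (star U * (∑ j, (v j : ℂ) • A j) * U)).trace.re =
      ∑ j, v j * (C * (star U * A j * U)).trace.re := by
  simp [Finset.mul_sum, Finset.sum_mul, trace_sum, Complex.re_sum]

section Unitary

variable {ι : Type*} [Fintype ι] [DecidableEq ι]

lemma isCompact_unitaryGroup {𝕜 : Type*} [RCLike 𝕜] :
    IsCompact (unitaryGroup ι 𝕜 : Set (Matrix ι ι 𝕜)) :=
  (isCompact_univ_pi fun _ => isCompact_univ_pi fun _ => isCompact_closedBall (0 : 𝕜) 1)
    |>.of_isClosed_subset (isClosed_unitary (R := Matrix ι ι 𝕜))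
      fun U hU i _ j _ => by simpa using entry_norm_bound_of_unitary hU i j

lemma permMatrix_mem_unitaryGroup (σ : Equiv.Perm ι) : σ.permMatrix ℂ ∈ unitaryGroup ι ℂ := by
  rw [mem_unitaryGroup_iff', star_eq_conjTranspose, conjTranspose_permMatrix, ← permMatrix_mul,
    mul_inv_cancel, permMatrix_one]

lemma unistochastic_mem_doublyStochastic {U : Matrix ι ι ℂ} (hU : U ∈ unitaryGroup ι ℂ) :
    unistochastic U ∈ doublyStochastic ℝ ι := by
  have h_row (i : ι) : ∑ j, Complex.normSq (U i j) = 1 := by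
    have := congr_fun₂ (mem_unitaryGroup_iff.mp hU) i i
    simp only [mul_apply, star_apply, Complex.star_def, Complex.mul_conj, one_apply_eq] at this
    exact_mod_cast this
  have h_col (j : ι) : ∑ i, Complex.normSq (U i j) = 1 := by
    have := congr_fun₂ (mem_unitaryGroup_iff'.mp hU) j j
    simp only [mul_apply, star_apply, Complex.star_def, mul_comm, Complex.mul_conj,
      one_apply_eq] at this
    exact_mod_cast this
  exact mem_doublyStochastic_iff_sum.mpr ⟨fun _ _ => Complex.normSq_nonneg _, h_row, h_col⟩

lemma trace_diagonal_mul_star_mul_diagonal_mul (c l : ι → ℝ) (V : Matrix ι ι ℂ) :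
    (diagonal (fun i => (c i : ℂ)) * (star V * diagonal (fun k => (l k : ℂ)) * V)).trace =
      ((c ⬝ᵥ ((unistochastic V)ᵀ *ᵥ l) : ℝ) : ℂ) := by
  simp only [trace, diag, diagonal_mul, mul_apply (M := star V * diagonal _), mul_diagonal,
    star_apply, Complex.star_def, dotProduct, mulVec, transpose_apply, unistochastic, of_apply,
    Complex.ofReal_sum, Complex.ofReal_mul, Finset.mul_sum, Complex.normSq_eq_conj_mul_self]
  refine Finset.sum_congr rfl fun i _ => Finset.sum_congr rfl fun k _ => ?_
  ring

namespace Matrix.IsHermitian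

variable {H : Matrix ι ι ℂ}

lemma star_mul_mul_eq_conj_diagonal (hH : H.IsHermitian) (U : Matrix ι ι ℂ) :
    star U * H * U =
      star (star (hH.eigenvectorUnitary : Matrix ι ι ℂ) * U) *
        diagonal (fun k => (hH.eigenvalues k : ℂ)) *
          (star (hH.eigenvectorUnitary : Matrix ι ι ℂ) * U) := by
  set W : Matrix ι ι ℂ := (hH.eigenvectorUnitary : Matrix ι ι ℂ)
  have hD := hH.conjStarAlgAut_star_eigenvectorUnitary
  rw [Unitary.conjStarAlgAut_star_apply] at hD
  have hWW : W * star W = 1 := Unitary.mul_star_self_of_mem hH.eigenvectorUnitary.2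
  calc star U * H * U = star U * (W * star W) * H * ((W * star W) * U) := by
        rw [hWW, mul_one, one_mul]
    _ = star (star W * U) * (star W * H * W) * (star W * U) := by
        simp only [star_mul, star_star, Matrix.mul_assoc]
    _ = _ := by rw [hD]; rfl

lemma trace_diagonal_mul_conj (c : ι → ℝ) (hH : H.IsHermitian) (U : Matrix ι ι ℂ) :
    (diagonal (fun i => (c i : ℂ)) * (star U * H * U)).trace =
      ((c ⬝ᵥ ((unistochastic (star (hH.eigenvectorUnitary : Matrix ι ι ℂ) * U))ᵀ *ᵥ
        hH.eigenvalues) : ℝ) : ℂ) := by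
  rw [hH.star_mul_mul_eq_conj_diagonal, trace_diagonal_mul_star_mul_diagonal_mul]

end Matrix.IsHermitian

end Unitary

lemma re_trace_diagonal_mul_conj_le {n : ℕ} {H : Matrix (Fin n) (Fin n) ℂ} {c : Fin n → ℝ}
    (hc : Antitone c) (hH : H.IsHermitian) {U : Matrix (Fin n) (Fin n) ℂ}
    (hU : U ∈ unitaryGroup (Fin n) ℂ) :
    (diagonal (fun i => (c i : ℂ)) * (star U * H * U)).trace.re ≤ c ⬝ᵥ eigDesc H := by
  rw [hH.trace_diagonal_mul_conj, Complex.ofReal_re, eigDesc_eq hH]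
  refine dotProduct_mulVec_le_of_mem_doublyStochastic hc ?_ _
  exact transpose_mem_doublyStochastic_iff.mpr
    (unistochastic_mem_doublyStochastic (mul_mem (Unitary.star_mem hH.eigenvectorUnitary.2) hU))

lemma exists_re_trace_diagonal_mul_conj_eq {n : ℕ} {H : Matrix (Fin n) (Fin n) ℂ} (c : Fin n → ℝ)
    (hH : H.IsHermitian) :
    ∃ U ∈ unitaryGroup (Fin n) ℂ,
      (diagonal (fun i => (c i : ℂ)) * (star U * H * U)).trace.re = c ⬝ᵥ eigDesc H := by
  set W := hH.eigenvectorUnitary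
  refine ⟨W * (sortDesc hH.eigenvalues)⁻¹.permMatrix ℂ,
    mul_mem W.2 (permMatrix_mem_unitaryGroup _), ?_⟩
  rw [hH.trace_diagonal_mul_conj, Complex.ofReal_re, ← Matrix.mul_assoc,
    Unitary.coe_star_mul_self, Matrix.one_mul, unistochastic_permMatrix, transpose_permMatrix,
    inv_inv, permMatrix_mulVec, eigDesc_eq hH]

theorem stmt_11_general {n m : ℕ}
    (c : Fin n → ℝ) (hc : Antitone c)
    (C : Matrix (Fin n) (Fin n) ℂ)
    (hC : C = Matrix.diagonal fun i => (c i : ℂ))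
    (A : Fin m → Matrix (Fin n) (Fin n) ℂ) (hA : ∀ j, (A j).IsHermitian) :
    convexHull ℝ (jointCNumRangeR C A) =
      ⋂ v ∈ { v : Fin m → ℝ | ∑ i, v i * v i = 1 },
        { a : Fin m → ℝ | ∑ j, v j * a j ≤
            ∑ i, c i * eigDesc (∑ j, (v j : ℂ) • A j) i } := by
  subst hC
  set φ : Matrix (Fin n) (Fin n) ℂ → Fin m → ℝ :=
    fun U j => (diagonal (fun i => (c i : ℂ)) * (star U * A j * U)).trace.re
  have h_range : jointCNumRangeR (diagonal fun i => (c i : ℂ)) A =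
      φ '' (unitaryGroup (Fin n) ℂ : Set (Matrix (Fin n) (Fin n) ℂ)) := by
    ext p
    constructor
    · rintro ⟨U, hU, hp⟩
      exact ⟨U, hU, funext fun j => by simp [φ, ← hp j]⟩
    · rintro ⟨U, hU, rfl⟩
      exact ⟨U, hU, fun j => by simp [φ, (hA j).trace_diagonal_mul_conj]⟩
  have hH (v : Fin m → ℝ) : (∑ j, (v j : ℂ) • A j).IsHermitian :=
    isSelfAdjoint_sum _ fun j _ => (hA j).smul (by simp [IsSelfAdjoint])
  rw [h_range]
  refine convexHull_eq_iInter_halfSpaces (isCompact_unitaryGroup.image (by fun_prop))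
    (fun v => c ⬝ᵥ eigDesc (∑ j, (v j : ℂ) • A j)) ?_ ?_
  · rintro v _ ⟨U, hU, rfl⟩
    have := re_trace_diagonal_mul_conj_le hc (hH v) hU
    rwa [re_trace_mul_conj_sum_smul] at this
  · intro v
    obtain ⟨U, hU, hUv⟩ := exists_re_trace_diagonal_mul_conj_eq c (hH v)
    exact ⟨φ U, ⟨U, hU, rfl⟩, by rw [← hUv, re_trace_mul_conj_sum_smul]; rfl⟩

theorem stmt_11 {n m : ℕ} (hn : 0 < n) (hm : 0 < m)
    (c : Fin n → ℝ) (hc : Antitone c)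
    (C : Matrix (Fin n) (Fin n) ℂ)
    (hC : C = Matrix.diagonal fun i => (c i : ℂ))
    (A : Fin m → Matrix (Fin n) (Fin n) ℂ) (hA : ∀ j, (A j).IsHermitian) :
    convexHull ℝ (jointCNumRangeR C A) =
      ⋂ v ∈ { v : Fin m → ℝ | ∑ i, v i * v i = 1 },
        { a : Fin m → ℝ | ∑ j, v j * a j ≤
            ∑ i, c i * eigDesc (∑ j, (v j : ℂ) • A j) i } :=
  stmt_11_general c hc C hC A hA
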